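/- Let L ∈ ℝ^{m×n} have rank r and satisfy μ₂-row incoherence: max_i ‖V_Lᵀeᵢ‖₂ ≤ √(μ₂ r/n) where V_L is the matrix of right singular vectors. Let J ⊆ [n] with C = L(:,J) of rank r and set β = √(|J|/n)·‖(V_L(J,:))†‖₂. Then the right singular vectors V_C of C satisfy max_i ‖V_Cᵀeᵢ‖₂ ≤ β κ(L) √(μ₂ r/|J|). -/

import Mathlib

/-! The right singular vectors of `C` lie in the column space of `V_L(J,:)`: `V_C = V_L(J,:) M` with
`M = Σ_L W_Lᵀ W_C Σ_C⁻¹`. Since `V_L(J,:) (V_L(J,:))† V_L(J,:) = V_L(J,:)`, this gives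
`V_C = V_L(J,:) ((V_L(J,:))† V_C)`, so each row of `V_C` is the corresponding row of `V_L(J,:)` times a
matrix of spectral norm at most `‖(V_L(J,:))†‖₂`. Incoherence of `V_L` bounds that row by `√(μ₂ r / n)`,
and the factor `κ(L) ≥ 1` is free unless `L = 0`, in which case `V_C = 0`. -/

open Matrix BigOperators MeasureTheory

noncomputable def specNorm {m n : ℕ} (A : Matrix (Fin m) (Fin n) ℝ) : ℝ :=
  ‖LinearMap.toContinuousLinearMap (Matrix.toEuclideanLin A)‖

def IsMPInv {m n : ℕ} (A : Matrix (Fin m) (Fin n) ℝ) (B : Matrix (Fin n) (Fin m) ℝ) : Prop :=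
  A * B * A = A ∧ B * A * B = B ∧ (A * B)ᵀ = A * B ∧ (B * A)ᵀ = B * A

noncomputable def rowNorm {m n : ℕ} (A : Matrix (Fin m) (Fin n) ℝ) (i : Fin m) : ℝ :=
  Real.sqrt (∑ j, (A i j) ^ 2)

noncomputable def entryMax {m n : ℕ} (A : Matrix (Fin m) (Fin n) ℝ) : ℝ :=
  ⨆ i, ⨆ j, |A i j|

open scoped Matrix.Norms.L2Operator

lemma sqrt_div_eq_sqrt_div_mul_sqrt_div (a : ℝ) (n : ℕ) {k : ℕ} (hk : k ≠ 0) :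
    Real.sqrt (a / n) = Real.sqrt (k / n) * Real.sqrt (a / k) := by
  have hk' : (k : ℝ) ≠ 0 := Nat.cast_ne_zero.mpr hk
  rw [← Real.sqrt_mul (by positivity)]
  field_simp

section SVD

variable {R : Type*} [Field R] {m k r : Type*} [Fintype m] [Fintype r] [DecidableEq r]

lemma transpose_mul_mul_diagonal_inv_of_svd {W : Matrix m r R} {σ : r → R} (V : Matrix k r R)
    (hW : Wᵀ * W = 1) (hσ : ∀ i, σ i ≠ 0) :
    (W * diagonal σ * Vᵀ)ᵀ * W * diagonal σ⁻¹ = V := by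
  have hσσ : diagonal σ * diagonal σ⁻¹ = 1 := by
    rw [diagonal_mul_diagonal, ← diagonal_one]
    exact congrArg diagonal (funext fun i => mul_inv_cancel₀ (hσ i))
  simp only [transpose_mul, transpose_transpose, diagonal_transpose, Matrix.mul_assoc]
  rw [← Matrix.mul_assoc Wᵀ, hW, Matrix.one_mul, hσσ, Matrix.mul_one]

end SVD

section Norms

variable {m n l : ℕ}

lemma specNorm_eq (A : Matrix (Fin m) (Fin n) ℝ) : specNorm A = ‖A‖ := rfl

lemma specNorm_nonneg (A : Matrix (Fin m) (Fin n) ℝ) : 0 ≤ specNorm A := norm_nonneg A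

lemma specNorm_mul_le (A : Matrix (Fin m) (Fin n) ℝ) (B : Matrix (Fin n) (Fin l) ℝ) :
    specNorm (A * B) ≤ specNorm A * specNorm B := l2_opNorm_mul A B

lemma specNorm_transpose (A : Matrix (Fin m) (Fin n) ℝ) : specNorm Aᵀ = specNorm A :=
  l2_opNorm_conjTranspose A

lemma specNorm_le_one_of_transpose_mul_self {U : Matrix (Fin m) (Fin n) ℝ} (hU : Uᵀ * U = 1) :
    specNorm U ≤ 1 := by
  have hone : ‖(1 : Matrix (Fin n) (Fin n) ℝ)‖ ≤ 1 := by
    rw [← diagonal_one, l2_opNorm_diagonal]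
    exact (pi_norm_le_iff_of_nonneg zero_le_one).mpr fun _ => by simp
  have hsq : ‖U‖ * ‖U‖ ≤ 1 := by
    rw [← l2_opNorm_conjTranspose_mul_self]
    exact (congrArg norm hU).le.trans hone
  rw [specNorm_eq]
  nlinarith [norm_nonneg U]

lemma one_le_specNorm_mul_specNorm {A : Matrix (Fin m) (Fin n) ℝ} {B : Matrix (Fin n) (Fin m) ℝ}
    (hABA : A * B * A = A) (hA : A ≠ 0) : 1 ≤ specNorm A * specNorm B := by
  have hpos : 0 < specNorm A := by
    rw [specNorm_eq]
    exact norm_pos_iff.mpr hA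
  have : specNorm A ≤ specNorm A * specNorm B * specNorm A :=
    calc specNorm A = specNorm (A * B * A) := by rw [hABA]
      _ ≤ specNorm (A * B) * specNorm A := specNorm_mul_le _ _
      _ ≤ specNorm A * specNorm B * specNorm A := by
        gcongr
        exact specNorm_mul_le _ _
  nlinarith

lemma rowNorm_eq_norm (A : Matrix (Fin m) (Fin n) ℝ) (i : Fin m) :
    rowNorm A i = ‖(EuclideanSpace.equiv (Fin n) ℝ).symm (A i)‖ := by
  simp [rowNorm, EuclideanSpace.norm_eq]

lemma rowNorm_nonneg (A : Matrix (Fin m) (Fin n) ℝ) (i : Fin m) : 0 ≤ rowNorm A i :=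
  Real.sqrt_nonneg _

lemma rowNorm_zero (i : Fin m) : rowNorm (0 : Matrix (Fin m) (Fin n) ℝ) i = 0 := by
  simp [rowNorm]

lemma rowNorm_submatrix_id {p : ℕ} (A : Matrix (Fin m) (Fin n) ℝ) (g : Fin p → Fin m) (i : Fin p) :
    rowNorm (A.submatrix g id) i = rowNorm A (g i) := rfl

lemma rowNorm_mul_le (A : Matrix (Fin m) (Fin n) ℝ) (B : Matrix (Fin n) (Fin l) ℝ) (i : Fin m) :
    rowNorm (A * B) i ≤ specNorm B * rowNorm A i := by
  have hrow : (A * B) i = Bᵀ *ᵥ A i := by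
    rw [mul_apply_eq_vecMul, mulVec_transpose]
  rw [rowNorm_eq_norm, rowNorm_eq_norm, hrow, ← specNorm_transpose B]
  exact l2_opNorm_mulVec Bᵀ _

lemma rowNorm_le_of_eq_mul {s : ℕ} {U : Matrix (Fin m) (Fin s) ℝ} {A : Matrix (Fin m) (Fin n) ℝ}
    {Ad : Matrix (Fin n) (Fin m) ℝ} {M : Matrix (Fin n) (Fin s) ℝ} (hU : Uᵀ * U = 1)
    (hUA : U = A * M) (hAd : A * Ad * A = A) (i : Fin m) :
    rowNorm U i ≤ specNorm Ad * rowNorm A i := by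
  have hU_eq : U = A * (Ad * U) := by
    rw [← Matrix.mul_assoc, hUA, ← Matrix.mul_assoc, hAd]
  calc rowNorm U i = rowNorm (A * (Ad * U)) i := by rw [← hU_eq]
    _ ≤ specNorm (Ad * U) * rowNorm A i := rowNorm_mul_le _ _ _
    _ ≤ specNorm Ad * specNorm U * rowNorm A i :=
      mul_le_mul_of_nonneg_right (specNorm_mul_le _ _) (rowNorm_nonneg A i)
    _ ≤ specNorm Ad * rowNorm A i := by
      refine mul_le_mul_of_nonneg_right ?_ (rowNorm_nonneg A i)
      exact mul_le_of_le_one_right (specNorm_nonneg Ad) (specNorm_le_one_of_transpose_mul_self hU)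

end Norms

theorem stmt19_general (m n r k : ℕ) (μ₂ : ℝ)
    (L : Matrix (Fin m) (Fin n) ℝ)
    (W : Matrix (Fin m) (Fin r) ℝ) (σ : Fin r → ℝ) (V : Matrix (Fin n) (Fin r) ℝ)
    (hL : L = W * Matrix.diagonal σ * Vᵀ)
    (hinc : ∀ i, rowNorm V i ≤ Real.sqrt (μ₂ * r / n))
    (g : Fin k → Fin n)
    (C : Matrix (Fin m) (Fin k) ℝ) (hC : C = L.submatrix id g)
    (WC : Matrix (Fin m) (Fin r) ℝ) (σC : Fin r → ℝ) (VC : Matrix (Fin k) (Fin r) ℝ)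
    (hWC : WCᵀ * WC = 1) (hVC : VCᵀ * VC = 1) (hσC : ∀ i, 0 < σC i)
    (hCSVD : C = WC * Matrix.diagonal σC * VCᵀ)
    (Ld : Matrix (Fin n) (Fin m) ℝ) (hLd : IsMPInv L Ld)
    (VJd : Matrix (Fin r) (Fin k) ℝ) (hVJd : IsMPInv (V.submatrix g id) VJd)
    (β : ℝ) (hβ : β = Real.sqrt ((k : ℝ) / n) * specNorm VJd) :
    ∀ i, rowNorm VC i ≤ β * (specNorm L * specNorm Ld) * Real.sqrt (μ₂ * r / k) := by
  intro i
  have hVC_eq : VC = Cᵀ * WC * diagonal σC⁻¹ := by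
    rw [hCSVD, transpose_mul_mul_diagonal_inv_of_svd VC hWC fun j => (hσC j).ne']
  have hVC_col : VC = V.submatrix g id * (diagonal σ * Wᵀ * WC * diagonal σC⁻¹) := by
    rw [hVC_eq, hC, hL, submatrix_mul _ _ id id g Function.bijective_id, submatrix_id_id,
      ← transpose_submatrix]
    simp only [transpose_mul, transpose_transpose, diagonal_transpose, Matrix.mul_assoc]
  have hrow : rowNorm VC i ≤ β * Real.sqrt (μ₂ * r / k) :=
    calc rowNorm VC i ≤ specNorm VJd * rowNorm (V.submatrix g id) i :=
          rowNorm_le_of_eq_mul hVC hVC_col hVJd.1 i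
      _ = specNorm VJd * rowNorm V (g i) := by rw [rowNorm_submatrix_id]
      _ ≤ specNorm VJd * Real.sqrt (μ₂ * r / n) :=
          mul_le_mul_of_nonneg_left (hinc (g i)) (specNorm_nonneg _)
      _ = β * Real.sqrt (μ₂ * r / k) := by
          rw [sqrt_div_eq_sqrt_div_mul_sqrt_div (μ₂ * r) n (k := k) i.pos.ne', hβ]
          ring
  have hβ_nonneg : 0 ≤ β := hβ ▸ mul_nonneg (Real.sqrt_nonneg _) (specNorm_nonneg _)
  rcases eq_or_ne L 0 with hL0 | hL0
  · have hVC0 : VC = 0 := by simp [hVC_eq, hC, hL0]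
    rw [hVC0, rowNorm_zero]
    exact mul_nonneg (mul_nonneg hβ_nonneg (mul_nonneg (specNorm_nonneg L) (specNorm_nonneg Ld)))
      (Real.sqrt_nonneg _)
  · calc rowNorm VC i ≤ β * 1 * Real.sqrt (μ₂ * r / k) := by rwa [mul_one]
      _ ≤ β * (specNorm L * specNorm Ld) * Real.sqrt (μ₂ * r / k) := by
          gcongr
          exact one_le_specNorm_mul_specNorm hLd.1 hL0

theorem stmt19 (m n r k : ℕ) (μ₂ : ℝ)
    (L : Matrix (Fin m) (Fin n) ℝ)
    (W : Matrix (Fin m) (Fin r) ℝ) (σ : Fin r → ℝ) (V : Matrix (Fin n) (Fin r) ℝ)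
    (hW : Wᵀ * W = 1) (hV : Vᵀ * V = 1) (hσ : ∀ i, 0 < σ i)
    (hL : L = W * Matrix.diagonal σ * Vᵀ)
    (hrank : L.rank = r)
    (hinc : ∀ i, rowNorm V i ≤ Real.sqrt (μ₂ * r / n))
    (g : Fin k → Fin n) (hg : Function.Injective g)
    (C : Matrix (Fin m) (Fin k) ℝ) (hC : C = L.submatrix id g)
    (hCrank : C.rank = r)
    (WC : Matrix (Fin m) (Fin r) ℝ) (σC : Fin r → ℝ) (VC : Matrix (Fin k) (Fin r) ℝ)
    (hWC : WCᵀ * WC = 1) (hVC : VCᵀ * VC = 1) (hσC : ∀ i, 0 < σC i)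
    (hCSVD : C = WC * Matrix.diagonal σC * VCᵀ)
    (Ld : Matrix (Fin n) (Fin m) ℝ) (hLd : IsMPInv L Ld)
    (VJd : Matrix (Fin r) (Fin k) ℝ) (hVJd : IsMPInv (V.submatrix g id) VJd)
    (β : ℝ) (hβ : β = Real.sqrt ((k : ℝ) / n) * specNorm VJd) :
    ∀ i, rowNorm VC i ≤ β * (specNorm L * specNorm Ld) * Real.sqrt (μ₂ * r / k) :=
  stmt19_general m n r k μ₂ L W σ V hL hinc g C hC WC σC VC hWC hVC hσC hCSVD Ld hLd VJd hVJd β hβ
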